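/- Let (R,B,L) be a Hadamard triple and u_B(x) = |(1/N)Σ_{b∈B} e^{2πi⟨b,x⟩}|². Then the set 𝒵 = {ξ ∈ ℝ^d : μ̂(ξ+k) = 0 for all k ∈ ℤ^d} is u_B-invariant with respect to any complete set of representatives 𝓛 mod R^T(ℤ^d): if x ∈ 𝒵, ℓ ∈ 𝓛 and u_B((R^T)^{-1}(x+ℓ)) > 0, then (R^T)^{-1}(x+ℓ) ∈ 𝒵. -/

import Mathlib

open scoped BigOperators ENNReal
open Matrix MeasureTheory

noncomputable section

/-- Cast of an integer matrix to a real matrix. -/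
def mR {d : ℕ} (R : Matrix (Fin d) (Fin d) ℤ) : Matrix (Fin d) (Fin d) ℝ :=
  R.map (Int.cast : ℤ → ℝ)

/-- Cast of an integer vector to a real vector. -/
def vR {d : ℕ} (b : Fin d → ℤ) : Fin d → ℝ := fun i => (b i : ℝ)

/-- The standard inner product on ℝ^d. -/
def ip {d : ℕ} (x y : Fin d → ℝ) : ℝ := ∑ i, x i * y i

/-- A matrix is expansive if all of its complex eigenvalues have modulus > 1. -/
def Expansive {d : ℕ} (R : Matrix (Fin d) (Fin d) ℤ) : Prop :=
  ∀ z ∈ spectrum ℂ (R.map (Int.cast : ℤ → ℂ)), 1 < ‖z‖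

/-- The matrix H = (1/√N)[e^{2πi⟨S⁻¹ a, ℓ⟩}]_{ℓ ∈ L, a ∈ A}. -/
def hMatrix {d : ℕ} (S : Matrix (Fin d) (Fin d) ℤ) (A L : Finset (Fin d → ℤ)) :
    Matrix L A ℂ := fun ℓ a =>
  ((1 / Real.sqrt (A.card) : ℝ) : ℂ) *
    Complex.exp (2 * (Real.pi : ℂ) * Complex.I *
      ((ip ((mR S)⁻¹.mulVec (vR (a : Fin d → ℤ))) (vR (ℓ : Fin d → ℤ)) : ℝ) : ℂ))

/-- (S, A, L) is a Hadamard triple: #A = #L and the matrix H is unitary (H* H = 1). -/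
def IsHadamardTriple {d : ℕ} (S : Matrix (Fin d) (Fin d) ℤ) (A L : Finset (Fin d → ℤ)) : Prop :=
  A.card = L.card ∧ (hMatrix S A L)ᴴ * hMatrix S A L = 1

/-- B is a simple digit set for R: distinct elements are incongruent mod R(ℤ^d). -/
def SimpleDigits {d : ℕ} (R : Matrix (Fin d) (Fin d) ℤ) (B : Finset (Fin d → ℤ)) : Prop :=
  ∀ b ∈ B, ∀ b' ∈ B, (∃ k : Fin d → ℤ, b - b' = R.mulVec k) → b = b'

/-- Bb is a complete set of representatives modulo R(ℤ^d). -/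
def CompleteResidues {d : ℕ} (R : Matrix (Fin d) (Fin d) ℤ) (Bb : Finset (Fin d → ℤ)) : Prop :=
  SimpleDigits R Bb ∧ ∀ x : Fin d → ℤ, ∃ b ∈ Bb, ∃ k : Fin d → ℤ, x = b + R.mulVec k

/-- B_k = B + RB + ⋯ + R^{k-1}B. -/
def Bk {d : ℕ} (R : Matrix (Fin d) (Fin d) ℤ) (B : Finset (Fin d → ℤ)) (k : ℕ) :
    Finset (Fin d → ℤ) :=
  (Fintype.piFinset (fun _ : Fin k => B)).image
    (fun b => ∑ j : Fin k, (R ^ (j : ℕ)).mulVec (b j))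

/-- The element of B_n associated to a word b ∈ B^n. -/
def beta {d : ℕ} (R : Matrix (Fin d) (Fin d) ℤ) {n : ℕ} (b : Fin n → (Fin d → ℤ)) :
    Fin d → ℤ := ∑ j : Fin n, (R ^ (j : ℕ)).mulVec (b j)

/-- τ_b(x) = R⁻¹(x + b). -/
def tau {d : ℕ} (R : Matrix (Fin d) (Fin d) ℤ) (b : Fin d → ℤ) (x : Fin d → ℝ) : Fin d → ℝ :=
  (mR R)⁻¹.mulVec (x + vR b)

/-- τ at level n: x ↦ R^{-n}(x + b); the composition τ_{b_1}∘⋯∘τ_{b_n} equals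
`tauN R n (beta R b)` under the identification of words with digits in B_n. -/
def tauN {d : ℕ} (R : Matrix (Fin d) (Fin d) ℤ) (n : ℕ) (b : Fin d → ℤ) (x : Fin d → ℝ) :
    Fin d → ℝ := ((mR R) ^ n)⁻¹.mulVec (x + vR b)

/-- T is the attractor T(R,B): the (unique) nonempty compact set with T = ⋃_b τ_b(T). -/
def IsAttractor {d : ℕ} (R : Matrix (Fin d) (Fin d) ℤ) (B : Finset (Fin d → ℤ))
    (T : Set (Fin d → ℝ)) : Prop :=
  T.Nonempty ∧ IsCompact T ∧ T = ⋃ b ∈ B, tau R b '' T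

/-- μ is the equal-weight self-affine measure: μ = (1/N) Σ_b μ ∘ τ_b⁻¹. -/
def IsSelfAffine {d : ℕ} (R : Matrix (Fin d) (Fin d) ℤ) (B : Finset (Fin d → ℤ))
    (μ : Measure (Fin d → ℝ)) : Prop :=
  μ = (B.card : ℝ≥0∞)⁻¹ • ∑ b ∈ B, μ.map (tau R b)

/-- The no-overlap condition. -/
def NoOverlap {d : ℕ} (R : Matrix (Fin d) (Fin d) ℤ) (B : Finset (Fin d → ℤ))
    (μ : Measure (Fin d → ℝ)) (T : Set (Fin d → ℝ)) : Prop :=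
  ∀ b ∈ B, ∀ b' ∈ B, b ≠ b' → μ (tau R b '' T ∩ tau R b' '' T) = 0

/-- The Fourier transform μ̂(ξ) = ∫ e^{-2πi⟨ξ,x⟩} dμ(x). -/
def ft {d : ℕ} (μ : Measure (Fin d → ℝ)) (ξ : Fin d → ℝ) : ℂ :=
  ∫ x, Complex.exp (-(2 * (Real.pi : ℂ) * Complex.I * ((ip ξ x : ℝ) : ℂ))) ∂μ

/-- M_B(ξ) = (1/N) Σ_{b∈B} e^{-2πi⟨b,ξ⟩}. -/
def maskB {d : ℕ} (B : Finset (Fin d → ℤ)) (ξ : Fin d → ℝ) : ℂ :=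
  (B.card : ℂ)⁻¹ *
    ∑ b ∈ B, Complex.exp (-(2 * (Real.pi : ℂ) * Complex.I * ((ip (vR b) ξ : ℝ) : ℂ)))

/-- M_{B_n}(ξ) = (1/N^n) Σ_{b∈B_n} e^{-2πi⟨b,ξ⟩} (summed over words). -/
def maskBn {d : ℕ} (R : Matrix (Fin d) (Fin d) ℤ) (B : Finset (Fin d → ℤ)) (n : ℕ)
    (ξ : Fin d → ℝ) : ℂ :=
  ((B.card : ℂ) ^ n)⁻¹ * ∑ b ∈ Fintype.piFinset (fun _ : Fin n => B),
    Complex.exp (-(2 * (Real.pi : ℂ) * Complex.I * ((ip (vR (beta R b)) ξ : ℝ) : ℂ)))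

/-- u_B(x) = |(1/N) Σ_{b∈B} e^{2πi⟨b,x⟩}|². -/
def uB {d : ℕ} (B : Finset (Fin d → ℤ)) (x : Fin d → ℝ) : ℝ :=
  ‖(B.card : ℂ)⁻¹ *
    ∑ b ∈ B, Complex.exp (2 * (Real.pi : ℂ) * Complex.I * ((ip (vR b) x : ℝ) : ℂ))‖ ^ 2

/-- Σ_{λ∈J} |N^{-n/2} Σ_{b∈B_n} w_b e^{-2πi⟨R^{-n}b,λ⟩}|². -/
def frameSum {d : ℕ} (R : Matrix (Fin d) (Fin d) ℤ) (B : Finset (Fin d → ℤ)) (n : ℕ)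
    (J : Finset (Fin d → ℤ)) (w : (Fin d → ℤ) → ℂ) : ℝ :=
  ∑ lam ∈ J, ‖((1 / Real.sqrt ((B.card : ℝ) ^ n) : ℝ) : ℂ) *
    ∑ b ∈ Bk R B n, w b * Complex.exp (-(2 * (Real.pi : ℂ) * Complex.I *
      ((ip (((mR R) ^ n)⁻¹.mulVec (vR b)) (vR lam) : ℝ) : ℂ)))‖ ^ 2

/-- The almost-Parseval-frame inequality at level n with constant ε and frequency set J. -/
def APF {d : ℕ} (R : Matrix (Fin d) (Fin d) ℤ) (B : Finset (Fin d → ℤ)) (n : ℕ)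
    (J : Finset (Fin d → ℤ)) (ε : ℝ) : Prop :=
  ∀ w : (Fin d → ℤ) → ℂ,
    (1 - ε) * (∑ b ∈ Bk R B n, ‖w b‖ ^ 2) ≤ frameSum R B n J w ∧
    frameSum R B n J w ≤ (1 + ε) * (∑ b ∈ Bk R B n, ‖w b‖ ^ 2)

/-!
Self-affinity of `μ` gives the refinement equation `μ̂(ξ) = M_B(R^{-T} ξ) μ̂(R^{-T} ξ)`, with
`|M_B|² = u_B` and `M_B` being `ℤ^d`-periodic. Take `ξ = x + ℓ + Rᵀk`, which lies in `x + ℤ^d`, so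
that `μ̂(ξ) = 0`, while `R^{-T} ξ = y + k` with `y = R^{-T}(x + ℓ)`; hence
`0 = M_B(y) μ̂(y + k)` and `M_B(y) ≠ 0` because `u_B(y) > 0`.
-/

section Coordinates

variable {d : ℕ}

lemma vR_add (a b : Fin d → ℤ) : vR (a + b) = vR a + vR b := by
  funext i; simp [vR]

lemma vR_mulVec (M : Matrix (Fin d) (Fin d) ℤ) (v : Fin d → ℤ) :
    vR (M *ᵥ v) = mR M *ᵥ vR v := by
  funext i; simp [vR, mR, mulVec, dotProduct]

lemma mR_transpose (M : Matrix (Fin d) (Fin d) ℤ) : mR Mᵀ = (mR M)ᵀ := rfl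

lemma ip_comm (x y : Fin d → ℝ) : ip x y = ip y x := dotProduct_comm x y

lemma ip_add_right (x y z : Fin d → ℝ) : ip x (y + z) = ip x y + ip x z := dotProduct_add x y z

lemma ip_mulVec_right (M : Matrix (Fin d) (Fin d) ℝ) (ξ x : Fin d → ℝ) :
    ip ξ (M *ᵥ x) = ip (Mᵀ *ᵥ ξ) x := by
  rw [mulVec_transpose]; exact dotProduct_mulVec ξ M x

lemma ip_vR_vR (b k : Fin d → ℤ) : ip (vR b) (vR k) = ((b ⬝ᵥ k : ℤ) : ℝ) := by
  simp [ip, vR, dotProduct]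

lemma continuous_ip_right (ξ : Fin d → ℝ) : Continuous (ip ξ) := by
  unfold ip; fun_prop

lemma Expansive.det_mR_ne_zero {R : Matrix (Fin d) (Fin d) ℤ} (hR : Expansive R) :
    (mR R).det ≠ 0 := by
  intro h
  have hdet : R.det = 0 := by
    have := (Int.castRingHom ℝ).map_det R
    exact Int.cast_eq_zero.mp (this.trans h)
  have h0 : (0 : ℂ) ∈ spectrum ℂ (R.map (Int.cast : ℤ → ℂ)) := by
    rw [spectrum.zero_mem_iff, isUnit_iff_isUnit_det]
    have := (Int.castRingHom ℂ).map_det R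
    simp_all
  exact (hR 0 h0).not_ge (by simp)

lemma Expansive.inv_mulVec_add_mulVec {R : Matrix (Fin d) (Fin d) ℤ} (hR : Expansive R)
    (x : Fin d → ℝ) (ℓ k : Fin d → ℤ) :
    (mR Rᵀ)⁻¹ *ᵥ (x + vR (ℓ + Rᵀ *ᵥ k)) = (mR Rᵀ)⁻¹ *ᵥ (x + vR ℓ) + vR k := by
  have hunit : IsUnit (mR Rᵀ).det := by
    rw [mR_transpose, det_transpose]; exact hR.det_mR_ne_zero.isUnit
  rw [vR_add, vR_mulVec, ← add_assoc, mulVec_add, mulVec_mulVec, nonsing_inv_mul _ hunit,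
    one_mulVec]

end Coordinates

section Character

lemma norm_exp_neg_two_pi_I_mul (r : ℝ) :
    ‖Complex.exp (-(2 * (Real.pi : ℂ) * Complex.I * (r : ℂ)))‖ = 1 := by
  rw [show -(2 * (Real.pi : ℂ) * Complex.I * r) = ((-(2 * Real.pi * r) : ℝ) : ℂ) * Complex.I by
    push_cast; ring]
  exact Complex.norm_exp_ofReal_mul_I _

lemma exp_neg_two_pi_I_mul_add_int (r : ℝ) (m : ℤ) :
    Complex.exp (-(2 * (Real.pi : ℂ) * Complex.I * ((r + m : ℝ) : ℂ))) =
      Complex.exp (-(2 * (Real.pi : ℂ) * Complex.I * (r : ℂ))) := by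
  rw [show -(2 * (Real.pi : ℂ) * Complex.I * ((r + m : ℝ) : ℂ)) =
      -(2 * (Real.pi : ℂ) * Complex.I * r) + ((-m : ℤ) : ℂ) * (2 * Real.pi * Complex.I) by
    push_cast; ring, Complex.exp_add, Complex.exp_int_mul_two_pi_mul_I, mul_one]

lemma conj_exp_two_pi_I_mul (r : ℝ) :
    (starRingEnd ℂ) (Complex.exp (2 * (Real.pi : ℂ) * Complex.I * (r : ℂ))) =
      Complex.exp (-(2 * (Real.pi : ℂ) * Complex.I * (r : ℂ))) := by
  rw [← Complex.exp_conj]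
  simp only [map_mul, map_ofNat, Complex.conj_I, Complex.conj_ofReal]
  ring_nf

variable {d : ℕ}

lemma continuous_exp_neg_two_pi_I_ip (ξ : Fin d → ℝ) :
    Continuous fun x => Complex.exp (-(2 * (Real.pi : ℂ) * Complex.I * (ip ξ x : ℂ))) := by
  have := continuous_ip_right ξ
  fun_prop

lemma integrable_exp_neg_two_pi_I_ip (ξ : Fin d → ℝ) (ν : Measure (Fin d → ℝ))
    [IsFiniteMeasure ν] :
    Integrable (fun x => Complex.exp (-(2 * (Real.pi : ℂ) * Complex.I * (ip ξ x : ℂ)))) ν :=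
  (integrable_const (1 : ℝ)).mono' (continuous_exp_neg_two_pi_I_ip ξ).aestronglyMeasurable
    (.of_forall fun _ => (norm_exp_neg_two_pi_I_mul _).le)

end Character

section Mask

variable {d : ℕ} (B : Finset (Fin d → ℤ))

lemma maskB_add_vR (y : Fin d → ℝ) (k : Fin d → ℤ) : maskB B (y + vR k) = maskB B y := by
  simp only [maskB, ip_add_right, ip_vR_vR, exp_neg_two_pi_I_mul_add_int]

lemma norm_maskB_sq (y : Fin d → ℝ) : ‖maskB B y‖ ^ 2 = uB B y := by
  rw [uB, ← RCLike.norm_conj (_ * _), map_mul, map_inv₀, Complex.conj_natCast, map_sum]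
  simp only [conj_exp_two_pi_I_mul, maskB]

lemma maskB_ne_zero_of_uB_pos {y : Fin d → ℝ} (hy : 0 < uB B y) : maskB B y ≠ 0 := by
  intro h
  rw [← norm_maskB_sq, h] at hy
  simp at hy

end Mask

section Refinement

variable {d : ℕ} {R : Matrix (Fin d) (Fin d) ℤ}

lemma continuous_tau (b : Fin d → ℤ) : Continuous (tau R b) := by
  unfold tau; fun_prop

lemma ip_tau (b : Fin d → ℤ) (ξ x : Fin d → ℝ) :
    ip ξ (tau R b x) = ip ((mR Rᵀ)⁻¹ *ᵥ ξ) x + ip (vR b) ((mR Rᵀ)⁻¹ *ᵥ ξ) := by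
  rw [tau, ip_mulVec_right, transpose_nonsing_inv, ← mR_transpose, ip_add_right, ip_comm (vR b)]

lemma ft_map_tau (μ : Measure (Fin d → ℝ)) (b : Fin d → ℤ) (ξ : Fin d → ℝ) :
    ft (μ.map (tau R b)) ξ =
      Complex.exp (-(2 * (Real.pi : ℂ) * Complex.I * (ip (vR b) ((mR Rᵀ)⁻¹ *ᵥ ξ) : ℂ))) *
        ft μ ((mR Rᵀ)⁻¹ *ᵥ ξ) := by
  rw [ft, integral_map (continuous_tau b).aemeasurable
    (continuous_exp_neg_two_pi_I_ip ξ).aestronglyMeasurable, ft, ← integral_const_mul]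
  congr 1 with x
  rw [← Complex.exp_add, ip_tau]
  push_cast
  ring_nf

lemma IsSelfAffine.ft_eq_maskB_mul {B : Finset (Fin d → ℤ)} {μ : Measure (Fin d → ℝ)}
    [IsFiniteMeasure μ] (hμ : IsSelfAffine R B μ) (ξ : Fin d → ℝ) :
    ft μ ξ = maskB B ((mR Rᵀ)⁻¹ *ᵥ ξ) * ft μ ((mR Rᵀ)⁻¹ *ᵥ ξ) := by
  have hsum : ft (∑ b ∈ B, μ.map (tau R b)) ξ = ∑ b ∈ B, ft (μ.map (tau R b)) ξ :=
    integral_finsetSum_measure fun b _ => integrable_exp_neg_two_pi_I_ip ξ _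
  conv_lhs => rw [hμ]
  rw [ft, integral_smul_measure, ← ft, hsum, maskB, Finset.mul_sum, Finset.sum_mul]
  simp only [ft_map_tau, Finset.mul_sum, ENNReal.toReal_inv, ENNReal.toReal_natCast,
    Complex.real_smul, Complex.ofReal_inv, Complex.ofReal_natCast]
  congr 1 with b
  ring

end Refinement

theorem Z_is_uB_invariant_general {d : ℕ} (R : Matrix (Fin d) (Fin d) ℤ)
    (hR : Expansive R) (B : Finset (Fin d → ℤ))
    (μ : Measure (Fin d → ℝ)) [IsProbabilityMeasure μ] (hμ : IsSelfAffine R B μ)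
    (Lbar : Finset (Fin d → ℤ)) :
    ∀ x : Fin d → ℝ, (∀ k : Fin d → ℤ, ft μ (x + vR k) = 0) →
      ∀ ℓ ∈ Lbar, 0 < uB B ((mR Rᵀ)⁻¹.mulVec (x + vR ℓ)) →
        ∀ k : Fin d → ℤ, ft μ ((mR Rᵀ)⁻¹.mulVec (x + vR ℓ) + vR k) = 0 := by
  intro x hx ℓ _ hu k
  have hrefine := hμ.ft_eq_maskB_mul (x + vR (ℓ + Rᵀ *ᵥ k))
  rw [hx, hR.inv_mulVec_add_mulVec, maskB_add_vR] at hrefine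
  exact (mul_eq_zero.mp hrefine.symm).resolve_left (maskB_ne_zero_of_uB_pos B hu)

/-- the set 𝒵 is u_B-invariant. -/
theorem Z_is_uB_invariant {d : ℕ} (R : Matrix (Fin d) (Fin d) ℤ)
    (hR : Expansive R) (B L : Finset (Fin d → ℤ)) (hH : IsHadamardTriple R B L)
    (μ : Measure (Fin d → ℝ)) [IsProbabilityMeasure μ] (hμ : IsSelfAffine R B μ)
    (Lbar : Finset (Fin d → ℤ)) (hLbar : CompleteResidues Rᵀ Lbar) :
    ∀ x : Fin d → ℝ, (∀ k : Fin d → ℤ, ft μ (x + vR k) = 0) →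
      ∀ ℓ ∈ Lbar, 0 < uB B ((mR Rᵀ)⁻¹.mulVec (x + vR ℓ)) →
        ∀ k : Fin d → ℤ, ft μ ((mR Rᵀ)⁻¹.mulVec (x + vR ℓ) + vR k) = 0 :=
  Z_is_uB_invariant_general R hR B μ hμ Lbar
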